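/- arXiv:2402.01436 — 3 statements merged into one kernel-verified Lean document; each statement's English description precedes it below -/
import Mathlib

section
/- For a weakly decreasing sequence of nonnegative integers λ_1 ≥ ... ≥ λ_n ≥ 0, the quantity Π_{1 ≤ i < j ≤ n} [((λ_i + n + 1 - i)^2 - (λ_j + n + 1 - j)^2)/((n+1-i)^2 - (n+1-j)^2)] · Π_{1 ≤ i ≤ n} [(λ_i + n + 1 - i)/(n + 1 - i)] equals the determinant of the n×n matrix whose (i,j)-entry is C(λ_i - i + 2n - j + 1, 2n - 2j + 1). -/
/-- Generalized binomial coefficient `C(x,k) = x(x-1)⋯(x-k+1)/k!`. -/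
def gchoose (x : ℚ) (k : ℕ) : ℚ :=
  (∏ i ∈ Finset.range k, (x - i)) / (Nat.factorial k)

/-- Symmetric falling product: `∏_{t<2d+1} (x+d-t) = x ∏_{s<d} (x²-(s+1)²)`. -/
lemma prodA (x : ℚ) : ∀ d : ℕ, (∏ t ∈ Finset.range (2*d+1), (x + d - t)) =
    x * ∏ s ∈ Finset.range d, (x^2 - ((s:ℚ)+1)^2)
  | 0 => by simp
  | (d+1) => by
    have h1 : 2*(d+1)+1 = (2*d+1) + 1 + 1 := by ring
    rw [h1, Finset.prod_range_succ, Finset.prod_range_succ']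
    push_cast
    have h2 : ∀ t ∈ Finset.range (2*d+1),
        (x + ((d:ℚ)+1) - ((t:ℚ)+1)) = x + d - t := by
      intro t _; ring
    rw [Finset.prod_congr rfl h2, prodA x d, Finset.prod_range_succ]
    push_cast
    ring

lemma factRange (m : ℕ) : (∏ t ∈ Finset.range m, ((m:ℚ) - t)) = Nat.factorial m := by
  have := Finset.prod_range_reflect (fun j => ((j:ℚ)+1)) m
  have h2 : ∀ t ∈ Finset.range m, ((m:ℚ) - t) = ((m - 1 - t : ℕ) : ℚ) + 1 := by
    intro t ht
    rw [Finset.mem_range] at ht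
    have : (((m - 1 - t : ℕ)) : ℚ) = m - 1 - t := by
      push_cast [Nat.cast_sub (by omega : 1 + t ≤ m), Nat.sub_sub]; ring
    rw [this]; ring
  rw [Finset.prod_congr rfl h2, this, ← Finset.prod_range_add_one_eq_factorial m]
  push_cast
  rfl

lemma lemB (d : ℕ) : ((d:ℚ)+1) * (∏ s ∈ Finset.range d, (((d:ℚ)+1)^2 - ((s:ℚ)+1)^2))
    = Nat.factorial (2*d+1) := by
  rw [← prodA ((d:ℚ)+1) d]
  have h : ∀ t ∈ Finset.range (2*d+1), ((d:ℚ)+1 + d - t) = ((2*d+1 : ℕ):ℚ) - t := by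
    intro t _; push_cast; ring
  rw [Finset.prod_congr rfl h, factRange]

lemma prodRevPairs {n : ℕ} (f : Fin n → Fin n → ℚ) :
    (∏ i : Fin n, ∏ j ∈ Finset.Ioi i, f (Fin.rev j) (Fin.rev i)) =
    ∏ i : Fin n, ∏ j ∈ Finset.Ioi i, f i j := by
  rw [Finset.prod_sigma', Finset.prod_sigma']
  refine Finset.prod_nbij' (fun p => ⟨Fin.rev p.2, Fin.rev p.1⟩)
    (fun p => ⟨Fin.rev p.2, Fin.rev p.1⟩) ?_ ?_ ?_ ?_ ?_
  · rintro ⟨a, b⟩ hab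
    simp only [Finset.mem_sigma, Finset.mem_univ, Finset.mem_Ioi, true_and] at hab ⊢
    exact Fin.rev_lt_rev.mpr hab
  · rintro ⟨a, b⟩ hab
    simp only [Finset.mem_sigma, Finset.mem_univ, Finset.mem_Ioi, true_and] at hab ⊢
    exact Fin.rev_lt_rev.mpr hab
  · rintro ⟨a, b⟩ _; simp [Fin.rev_rev]
  · rintro ⟨a, b⟩ _; simp [Fin.rev_rev]
  · rintro ⟨a, b⟩ _; rfl

theorem weyl_dim_sp_det (n : ℕ) (lam : Fin n → ℕ)
    (hdec : ∀ i j : Fin n, i ≤ j → lam j ≤ lam i) :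
    (∏ i : Fin n, ∏ j ∈ Finset.Ioi i,
        ((((lam i : ℚ) + (n : ℚ) - (i : ℕ)) ^ 2 - ((lam j : ℚ) + (n : ℚ) - (j : ℕ)) ^ 2) /
          (((n : ℚ) - (i : ℕ)) ^ 2 - ((n : ℚ) - (j : ℕ)) ^ 2))) *
      (∏ i : Fin n, (((lam i : ℚ) + (n : ℚ) - (i : ℕ)) / ((n : ℚ) - (i : ℕ)))) =
    Matrix.det (Matrix.of fun i j : Fin n =>
      gchoose ((lam i : ℚ) + 2 * (n : ℚ) - (i : ℕ) - (j : ℕ) - 1) (2 * (n - 1 - (j : ℕ)) + 1)) := by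
  set l : Fin n → ℚ := fun i => (lam i : ℚ) + n - i with hl
  set m : Fin n → ℚ := fun i => (n : ℚ) - i with hm
  -- Step 1: the matrix entries
  have hcast : ∀ j : Fin n, ((n - 1 - (j:ℕ) : ℕ) : ℚ) = (n:ℚ) - 1 - j := by
    intro j
    have hj := j.isLt
    rw [Nat.sub_sub, Nat.cast_sub (by omega)]
    push_cast; ring
  have hmat : (Matrix.of fun i j : Fin n =>
      gchoose ((lam i : ℚ) + 2 * (n : ℚ) - (i : ℕ) - (j : ℕ) - 1) (2 * (n - 1 - (j : ℕ)) + 1)) =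
      Matrix.of fun i j : Fin n => l i *
        (((Nat.factorial (2 * (n - 1 - (j:ℕ)) + 1) : ℚ))⁻¹ *
          ∏ s ∈ Finset.range (n - 1 - (j:ℕ)), ((l i)^2 - ((s:ℚ)+1)^2)) := by
    ext i j
    simp only [Matrix.of_apply]
    have harg : (lam i : ℚ) + 2 * (n : ℚ) - (i : ℕ) - (j : ℕ) - 1
        = l i + ((n - 1 - (j:ℕ) : ℕ) : ℚ) := by
      rw [hcast j, hl]; ring
    rw [gchoose, harg, prodA (l i) (n - 1 - (j:ℕ))]
    rw [div_eq_mul_inv]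
    ring
  rw [hmat]
  -- Step 2: pull out row and column factors
  have hdetcol := Matrix.det_mul_column (fun i : Fin n => l i)
    (Matrix.of fun i j : Fin n => ((Nat.factorial (2 * (n - 1 - (j:ℕ)) + 1) : ℚ))⁻¹ *
        ∏ s ∈ Finset.range (n - 1 - (j:ℕ)), ((l i)^2 - ((s:ℚ)+1)^2))
  have hdetrow := Matrix.det_mul_row
    (fun j : Fin n => ((Nat.factorial (2 * (n - 1 - (j:ℕ)) + 1) : ℚ))⁻¹)
    (Matrix.of fun i j : Fin n => ∏ s ∈ Finset.range (n - 1 - (j:ℕ)), ((l i)^2 - ((s:ℚ)+1)^2))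
  simp only [Matrix.of_apply] at hdetcol hdetrow
  rw [hdetcol, hdetrow]
  -- Step 3: evaluate the remaining determinant as a Vandermonde determinant
  set p : Fin n → Polynomial ℚ :=
    fun k => ∏ s ∈ Finset.range (k:ℕ), (Polynomial.X - Polynomial.C (((s:ℚ)+1)^2)) with hp
  have hmonic : ∀ k : Fin n, (p k).Monic := fun k =>
    Polynomial.monic_prod_of_monic _ _ (fun s _ => Polynomial.monic_X_sub_C _)
  have hdeg : ∀ k : Fin n, (p k).natDegree = (k:ℕ) := by
    intro k
    rw [hp]
    rw [Polynomial.natDegree_prod_of_monic _ _ (fun s _ => Polynomial.monic_X_sub_C _)]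
    have : ∀ s ∈ Finset.range (k:ℕ),
        (Polynomial.X - Polynomial.C (((s:ℚ)+1)^2)).natDegree = 1 :=
      fun s _ => Polynomial.natDegree_X_sub_C _
    rw [Finset.sum_congr rfl this]
    simp
  have hvdm := Matrix.det_eval_matrixOfPolynomials_eq_det_vandermonde
    (fun i : Fin n => (l (Fin.rev i))^2) p hdeg hmonic
  have hsub : (Matrix.of fun i j : Fin n =>
      ∏ s ∈ Finset.range (n - 1 - (j:ℕ)), ((l i)^2 - ((s:ℚ)+1)^2)) =
      (Matrix.of fun i k : Fin n => (p k).eval ((l (Fin.rev i))^2)).submatrix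
        Fin.revPerm Fin.revPerm := by
    ext i j
    simp only [Matrix.submatrix_apply, Matrix.of_apply, Fin.revPerm_apply, Fin.rev_rev, hp,
      Polynomial.eval_prod, Polynomial.eval_sub, Polynomial.eval_X, Polynomial.eval_C,
      Fin.val_rev]
    have h : n - 1 - (j:ℕ) = n - ((j:ℕ)+1) := by omega
    rw [h]
  rw [hsub, Matrix.det_submatrix_equiv_self, ← hvdm, Matrix.det_vandermonde]
  have hrev := prodRevPairs (fun a b : Fin n => (l a)^2 - (l b)^2)
  rw [hrev]
  -- Step 4: assemble; the factorial product equals the denominator products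
  have hkey : ∀ i : Fin n, (∏ j ∈ Finset.Ioi i, ((m i)^2 - (m j)^2)) * m i
      = Nat.factorial (2 * (n - 1 - (i:ℕ)) + 1) := by
    intro i
    have hi := i.isLt
    have hIoi : (∏ j ∈ Finset.Ioi i, ((m i)^2 - (m j)^2)) =
        ∏ s ∈ Finset.range (n - 1 - (i:ℕ)), ((m i)^2 - ((s:ℚ)+1)^2) := by
      refine Finset.prod_nbij' (fun j => n - 1 - (j:ℕ))
        (fun s => (⟨n - 1 - s, by omega⟩ : Fin n)) ?_ ?_ ?_ ?_ ?_
      · intro j hj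
        have h0 : i < j := Finset.mem_Ioi.mp hj
        have h1 : (i:ℕ) < (j:ℕ) := h0
        have h2 := j.isLt
        simp only [Finset.mem_range]
        omega
      · intro s hs
        have h1 := Finset.mem_range.mp hs
        simp only [Finset.mem_Ioi]
        exact Fin.lt_def.mpr (show (i:ℕ) < n - 1 - s by omega)
      · intro j hj
        have h0 : i < j := Finset.mem_Ioi.mp hj
        have h1 : (i:ℕ) < (j:ℕ) := h0
        have h2 := j.isLt
        exact Fin.ext (show n - 1 - (n - 1 - (j:ℕ)) = (j:ℕ) by omega)
      · intro s hs
        have h1 := Finset.mem_range.mp hs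
        show n - 1 - (n - 1 - s) = s
        omega
      · intro j hj
        have h0 : i < j := Finset.mem_Ioi.mp hj
        have h1 : (i:ℕ) < (j:ℕ) := h0
        have h2 := j.isLt
        have hc : ((n - 1 - (j:ℕ) : ℕ) : ℚ) + 1 = (n:ℚ) - (j:ℕ) := by
          rw [Nat.cast_sub (by omega), Nat.cast_sub (by omega)]
          push_cast; ring
        simp only [hm, hc]
    rw [hIoi]
    have hd : m i = ((n - 1 - (i:ℕ) : ℕ) : ℚ) + 1 := by
      rw [hm, Nat.cast_sub (by omega), Nat.cast_sub (by omega)]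
      push_cast; ring
    rw [hd, mul_comm]
    exact lemB (n - 1 - (i:ℕ))
  -- nonvanishing facts
  have hfne : ∀ i : Fin n, (Nat.factorial (2 * (n - 1 - (i:ℕ)) + 1) : ℚ) ≠ 0 := by
    intro i
    exact Nat.cast_ne_zero.mpr (Nat.factorial_ne_zero _)
  have hmne : ∀ i : Fin n, m i ≠ 0 := by
    intro i
    have hi := i.isLt
    rw [hm]
    simp only
    have : ((i:ℕ):ℚ) < (n:ℚ) := by exact_mod_cast hi
    linarith
  have hMne : ∀ i : Fin n, ∀ j ∈ Finset.Ioi i, (m i)^2 - (m j)^2 ≠ 0 := by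
    intro i j hj
    rw [Finset.mem_Ioi] at hj
    have h1 : (i:ℕ) < (j:ℕ) := hj
    have h2 := j.isLt
    rw [hm]
    simp only
    have hji : ((i:ℕ):ℚ) < ((j:ℕ):ℚ) := by exact_mod_cast h1
    have hjn : ((j:ℕ):ℚ) < (n:ℚ) := by exact_mod_cast h2
    have : (0:ℚ) < (n:ℚ) - j := by linarith
    nlinarith
  -- rewrite LHS with l, m
  have hLHS : (∏ i : Fin n, ∏ j ∈ Finset.Ioi i,
        ((((lam i : ℚ) + (n : ℚ) - (i : ℕ)) ^ 2 - ((lam j : ℚ) + (n : ℚ) - (j : ℕ)) ^ 2) /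
          (((n : ℚ) - (i : ℕ)) ^ 2 - ((n : ℚ) - (j : ℕ)) ^ 2))) *
      (∏ i : Fin n, (((lam i : ℚ) + (n : ℚ) - (i : ℕ)) / ((n : ℚ) - (i : ℕ)))) =
      (∏ i : Fin n, ∏ j ∈ Finset.Ioi i, (((l i)^2 - (l j)^2) / ((m i)^2 - (m j)^2))) *
      ∏ i : Fin n, (l i / m i) := rfl
  rw [hLHS]
  -- split the divisions
  have hsplit : (∏ i : Fin n, ∏ j ∈ Finset.Ioi i, (((l i)^2 - (l j)^2) / ((m i)^2 - (m j)^2)))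
      = (∏ i : Fin n, ∏ j ∈ Finset.Ioi i, ((l i)^2 - (l j)^2)) /
        (∏ i : Fin n, ∏ j ∈ Finset.Ioi i, ((m i)^2 - (m j)^2)) := by
    rw [← Finset.prod_div_distrib]
    exact Finset.prod_congr rfl fun i _ => Finset.prod_div_distrib _ _
  have hsplit2 : (∏ i : Fin n, (l i / m i)) = (∏ i : Fin n, l i) / (∏ i : Fin n, m i) :=
    Finset.prod_div_distrib _ _
  rw [hsplit, hsplit2]
  -- the key global identity
  have hD : (∏ i : Fin n, ∏ j ∈ Finset.Ioi i, ((m i)^2 - (m j)^2)) * (∏ i : Fin n, m i)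
      = ∏ i : Fin n, (Nat.factorial (2 * (n - 1 - (i:ℕ)) + 1) : ℚ) := by
    rw [← Finset.prod_mul_distrib]
    exact Finset.prod_congr rfl fun i _ => hkey i
  have hDne : (∏ i : Fin n, ∏ j ∈ Finset.Ioi i, ((m i)^2 - (m j)^2)) ≠ 0 :=
    Finset.prod_ne_zero_iff.mpr fun i _ => Finset.prod_ne_zero_iff.mpr (hMne i)
  have hPmne : (∏ i : Fin n, m i) ≠ 0 := Finset.prod_ne_zero_iff.mpr fun i _ => hmne i
  have hFact : (∏ i : Fin n, ((Nat.factorial (2 * (n - 1 - (i:ℕ)) + 1) : ℚ))⁻¹)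
      = ((∏ i : Fin n, ∏ j ∈ Finset.Ioi i, ((m i)^2 - (m j)^2)) * (∏ i : Fin n, m i))⁻¹ := by
    rw [hD, ← Finset.prod_inv_distrib]
  rw [hFact]
  field_simp
end

section
/- For a weakly decreasing sequence of nonnegative integers λ_1 ≥ ... ≥ λ_n ≥ 0, the quantity Π_{1 ≤ i < j ≤ n} [((λ_i + n + 1/2 - i)^2 - (λ_j + n + 1/2 - j)^2)/((n + 1/2 - i)^2 - (n + 1/2 - j)^2)] · Π_{1 ≤ i ≤ n} [(λ_i + n + 1/2 - i)/(n + 1/2 - i)] equals 2^n times the determinant of the n×n matrix whose (i,j)-entry is C(λ_i - i + 2n - j + 1/2, 2n - 2j + 1), where C(x,k) = x(x-1)...(x-k+1)/k! is the generalized binomial coefficient. -/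
open Finset Polynomial Nat

lemma aux_prod_shift (x : ℚ) (k : ℕ) :
    (∏ t ∈ Finset.range (2*k+1), (x + (k:ℚ) - (t:ℕ))) =
      x * ∏ m ∈ Finset.range k, (x^2 - ((m:ℚ)+1)^2) := by
  induction k with
  | zero => simp
  | succ k ih =>
    have h2 : 2*(k+1)+1 = (2*k+1+1)+1 := by ring
    rw [h2, Finset.prod_range_succ', Finset.prod_range_succ]
    have e1 : ∀ t ∈ Finset.range (2*k+1),
        (x + ((k+1 : ℕ):ℚ) - ((t+1 : ℕ):ℚ)) = x + (k:ℚ) - (t:ℚ) := by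
      intro t _; push_cast; ring
    rw [Finset.prod_congr rfl e1, ih, Finset.prod_range_succ]
    push_cast
    ring

lemma gchoose_odd (x : ℚ) (k : ℕ) :
    gchoose (x + (k:ℚ)) (2*k+1) =
      x * (((2*k+1)! : ℚ))⁻¹ * (∏ m ∈ Finset.range k, (x^2 - ((m:ℚ)+1)^2)) := by
  rw [gchoose, aux_prod_shift, div_eq_mul_inv]
  ring

noncomputable def Qpoly (k : ℕ) : Polynomial ℚ :=
  ∏ m ∈ Finset.range k, (Polynomial.X - Polynomial.C (((m:ℚ)+1)^2))

lemma Qpoly_monic (k : ℕ) : (Qpoly k).Monic :=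
  Polynomial.monic_prod_of_monic _ _ fun m _ => Polynomial.monic_X_sub_C _

lemma Qpoly_natDegree (k : ℕ) : (Qpoly k).natDegree = k := by
  rw [Qpoly, Polynomial.natDegree_prod]
  · simp only [Polynomial.natDegree_X_sub_C]
    simp
  · intro m _; exact Polynomial.X_sub_C_ne_zero _

lemma Qpoly_eval (k : ℕ) (y : ℚ) :
    (Qpoly k).eval y = ∏ m ∈ Finset.range k, (y - ((m:ℚ)+1)^2) := by
  simp [Qpoly, Polynomial.eval_prod]

lemma prod_Ioi_rev (n : ℕ) (f : Fin n → Fin n → ℚ) :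
    (∏ i : Fin n, ∏ j ∈ Finset.Ioi i, f (Fin.rev j) (Fin.rev i)) =
      ∏ i : Fin n, ∏ j ∈ Finset.Ioi i, f i j := by
  rw [Finset.prod_sigma', Finset.prod_sigma']
  refine Finset.prod_bij' (fun x _ => ⟨Fin.rev x.2, Fin.rev x.1⟩)
    (fun x _ => ⟨Fin.rev x.2, Fin.rev x.1⟩) ?_ ?_ ?_ ?_ ?_
  · intro a ha
    simp only [Finset.mem_sigma, Finset.mem_Ioi, Finset.mem_univ, true_and] at ha ⊢
    exact Fin.rev_lt_rev.mpr ha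
  · intro a ha
    simp only [Finset.mem_sigma, Finset.mem_Ioi, Finset.mem_univ, true_and] at ha ⊢
    exact Fin.rev_lt_rev.mpr ha
  · intro a ha; simp
  · intro a ha; simp
  · intro a ha; simp

lemma det_poly_matrix (n : ℕ) (v : Fin n → ℚ) :
    Matrix.det (Matrix.of fun i j : Fin n =>
        ∏ m ∈ Finset.range (n - 1 - (j:ℕ)), (v i - ((m:ℚ)+1)^2)) =
      ∏ i : Fin n, ∏ j ∈ Finset.Ioi i, (v i - v j) := by
  have key : (Matrix.of fun i j : Fin n =>
        ∏ m ∈ Finset.range (n - 1 - (j:ℕ)), (v i - ((m:ℚ)+1)^2)).submatrix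
        (Fin.revPerm : Equiv.Perm (Fin n)) (Fin.revPerm : Equiv.Perm (Fin n)) =
      Matrix.of fun i j : Fin n => (Qpoly (j:ℕ)).eval (v (Fin.rev i)) := by
    ext i j
    have hj : (Fin.rev j : ℕ) = n - 1 - (j:ℕ) := by rw [Fin.val_rev]; omega
    have hj2 : n - 1 - (Fin.rev j : ℕ) = (j:ℕ) := by rw [hj]; omega
    simp only [Matrix.submatrix_apply, Fin.revPerm_apply, Matrix.of_apply, Qpoly_eval, hj2]
  rw [← Matrix.det_submatrix_equiv_self (Fin.revPerm) _, key,
    ← Matrix.det_eval_matrixOfPolynomials_eq_det_vandermonde (fun i => v (Fin.rev i))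
      (fun j => Qpoly (j:ℕ)) (fun j => Qpoly_natDegree _) (fun j => Qpoly_monic _),
    Matrix.det_vandermonde]
  exact prod_Ioi_rev n (fun i j => v i - v j)

lemma prod_two_n (n : ℕ) :
    (∏ j ∈ Finset.range n, ((((2*n:ℕ):ℚ) - (j:ℕ)) * ((j:ℚ)+1))) = ((2*n)! : ℚ) := by
  rw [Finset.prod_mul_distrib]
  have hB : (∏ j ∈ Finset.range n, ((j:ℚ)+1)) = (n ! : ℚ) := by
    calc (∏ j ∈ Finset.range n, ((j:ℚ)+1))
        = ((∏ j ∈ Finset.range n, (j+1) : ℕ) : ℚ) := by push_cast; rfl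
      _ = (n ! : ℚ) := by rw [Finset.prod_range_add_one_eq_factorial]
  have hA : (∏ j ∈ Finset.range n, (((2*n:ℕ):ℚ) - (j:ℕ)))
      = (((2*n).descFactorial n : ℕ) : ℚ) := by
    rw [Nat.descFactorial_eq_prod_range, Nat.cast_prod]
    refine Finset.prod_congr rfl fun j hj => ?_
    rw [Finset.mem_range] at hj
    rw [Nat.cast_sub (by omega : j ≤ 2*n)]
  have hN : (2*n).descFactorial n * n ! = (2*n)! := by
    rw [Nat.descFactorial_eq_factorial_mul_choose]
    have h := Nat.choose_mul_factorial_mul_factorial (show n ≤ 2*n by omega)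
    have h2 : 2*n - n = n := by omega
    rw [h2] at h
    rw [← h]; ring
  rw [hA, hB, ← Nat.cast_mul, hN]

lemma step_prod (n : ℕ) :
    (∏ j : Fin n, ((((n:ℚ))+1/2)^2 - ((n:ℚ) - (j:ℕ) - 1/2)^2)) = ((2*n)! : ℚ) := by
  rw [← prod_two_n n, Fin.prod_univ_eq_prod_range
    (fun j => (((n:ℚ))+1/2)^2 - ((n:ℚ) - (j:ℕ) - 1/2)^2)]
  refine Finset.prod_congr rfl fun j hj => ?_
  push_cast
  ring

lemma base_prod (n : ℕ) :
    (∏ i : Fin n, ∏ j ∈ Finset.Ioi i,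
        (((n:ℚ) - (i:ℕ) - 1/2)^2 - ((n:ℚ) - (j:ℕ) - 1/2)^2)) *
      (∏ i : Fin n, ((n:ℚ) - (i:ℕ) - 1/2)) =
    (∏ k ∈ Finset.range n, ((2*k+1)! : ℚ)) / 2^n := by
  induction n with
  | zero => simp
  | succ n ih =>
    simp only [Fin.prod_univ_succ, Fin.prod_Ioi_zero, Fin.prod_Ioi_succ,
      Fin.val_succ, Fin.val_zero]
    have e0 : ∀ j : Fin n,
        (((n+1:ℕ):ℚ) - (0:ℕ) - 1/2)^2 - (((n+1:ℕ):ℚ) - ((j:ℕ)+1:ℕ) - 1/2)^2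
          = (((n:ℚ))+1/2)^2 - ((n:ℚ) - (j:ℕ) - 1/2)^2 := by
      intro j; push_cast; ring
    have h1 : (∏ x : Fin n, ((((n+1:ℕ):ℚ) - ((0:ℕ):ℚ) - 1/2)^2 -
        (((n+1:ℕ):ℚ) - (((x:ℕ)+1:ℕ):ℚ) - 1/2)^2)) = ((2*n)! : ℚ) := by
      rw [← step_prod n]
      exact Finset.prod_congr rfl fun j _ => e0 j
    have h2 : (∏ x : Fin n, ∏ y ∈ Finset.Ioi x,
        ((((n+1:ℕ):ℚ) - (((x:ℕ)+1:ℕ):ℚ) - 1/2)^2 -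
          (((n+1:ℕ):ℚ) - (((y:ℕ)+1:ℕ):ℚ) - 1/2)^2)) =
        ∏ i : Fin n, ∏ j ∈ Finset.Ioi i,
          (((n:ℚ) - (i:ℕ) - 1/2)^2 - ((n:ℚ) - (j:ℕ) - 1/2)^2) := by
      refine Finset.prod_congr rfl fun i _ => Finset.prod_congr rfl fun j _ => ?_
      push_cast; ring
    have h3 : (∏ x : Fin n, (((n+1:ℕ):ℚ) - (((x:ℕ)+1:ℕ):ℚ) - 1/2)) =
        ∏ i : Fin n, ((n:ℚ) - (i:ℕ) - 1/2) := by
      refine Finset.prod_congr rfl fun i _ => ?_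
      push_cast; ring
    rw [h1, h2, h3, Finset.prod_range_succ]
    have hfac : ((2*n+1)! : ℚ) = (2*(n:ℚ)+1) * ((2*n)! : ℚ) := by
      rw [show 2*n+1 = (2*n)+1 from rfl, Nat.factorial_succ]
      push_cast; ring
    rw [hfac]
    push_cast at ih ⊢
    linear_combination (((2*n)! : ℚ) * ((n:ℚ) + 1/2)) * ih

theorem weyl_dim_so_odd_det (n : ℕ) (lam : Fin n → ℕ)
    (hdec : ∀ i j : Fin n, i ≤ j → lam j ≤ lam i) :
    (∏ i : Fin n, ∏ j ∈ Finset.Ioi i,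
        ((((lam i : ℚ) + (n : ℚ) - (i : ℕ) - 1/2) ^ 2 -
            ((lam j : ℚ) + (n : ℚ) - (j : ℕ) - 1/2) ^ 2) /
          (((n : ℚ) - (i : ℕ) - 1/2) ^ 2 - ((n : ℚ) - (j : ℕ) - 1/2) ^ 2))) *
      (∏ i : Fin n, (((lam i : ℚ) + (n : ℚ) - (i : ℕ) - 1/2) / ((n : ℚ) - (i : ℕ) - 1/2))) =
    2 ^ n * Matrix.det (Matrix.of fun i j : Fin n =>
      gchoose ((lam i : ℚ) + 2 * (n : ℚ) - (i : ℕ) - (j : ℕ) - 3/2)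
        (2 * (n - 1 - (j : ℕ)) + 1)) := by
  -- notation
  have hdet : Matrix.det (Matrix.of fun i j : Fin n =>
      gchoose ((lam i : ℚ) + 2 * (n : ℚ) - (i : ℕ) - (j : ℕ) - 3/2)
        (2 * (n - 1 - (j : ℕ)) + 1)) =
      (∏ i : Fin n, ((lam i : ℚ) + (n : ℚ) - (i : ℕ) - 1/2)) *
        ((∏ j : Fin n, (((2*(n-1-(j:ℕ))+1)! : ℚ))⁻¹) *
          (∏ i : Fin n, ∏ j ∈ Finset.Ioi i,
            (((lam i : ℚ) + (n : ℚ) - (i : ℕ) - 1/2) ^ 2 -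
              ((lam j : ℚ) + (n : ℚ) - (j : ℕ) - 1/2) ^ 2))) := by
    set P : Matrix (Fin n) (Fin n) ℚ := Matrix.of fun i j =>
      ∏ m ∈ Finset.range (n - 1 - (j:ℕ)),
        (((lam i : ℚ) + (n : ℚ) - (i : ℕ) - 1/2) ^ 2 - ((m:ℚ)+1)^2) with hP
    set B : Matrix (Fin n) (Fin n) ℚ := Matrix.of fun i j =>
      (((2*(n-1-(j:ℕ))+1)! : ℚ))⁻¹ * P i j with hB
    have hMB : (Matrix.of fun i j : Fin n =>
        gchoose ((lam i : ℚ) + 2 * (n : ℚ) - (i : ℕ) - (j : ℕ) - 3/2)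
          (2 * (n - 1 - (j : ℕ)) + 1)) =
        Matrix.of fun i j => ((lam i : ℚ) + (n : ℚ) - (i : ℕ) - 1/2) * B i j := by
      ext i j
      have hj : ((n-1-(j:ℕ) : ℕ) : ℚ) = (n:ℚ) - 1 - (j:ℕ) := by
        have h' : n - 1 - (j:ℕ) = n - ((j:ℕ)+1) := by omega
        rw [h', Nat.cast_sub (by omega : (j:ℕ)+1 ≤ n)]
        push_cast; ring
      have harg : (lam i : ℚ) + 2 * (n : ℚ) - (i : ℕ) - (j : ℕ) - 3/2 =
          ((lam i : ℚ) + (n : ℚ) - (i : ℕ) - 1/2) + ((n-1-(j:ℕ) : ℕ) : ℚ) := by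
        rw [hj]; ring
      rw [Matrix.of_apply, Matrix.of_apply, harg, gchoose_odd]
      simp only [hB, hP, Matrix.of_apply]
      ring
    rw [hMB, Matrix.det_mul_column, hB, Matrix.det_mul_row, hP]
    rw [det_poly_matrix n (fun i => ((lam i : ℚ) + (n : ℚ) - (i : ℕ) - 1/2) ^ 2)]
  rw [hdet]
  simp only [Finset.prod_div_distrib]
  have hbase := base_prod n
  have hC : (∏ j : Fin n, (((2*(n-1-(j:ℕ))+1)! : ℚ))⁻¹) =
      (∏ k ∈ Finset.range n, ((2*k+1)! : ℚ))⁻¹ := by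
    rw [← Finset.prod_inv_distrib,
      Fin.prod_univ_eq_prod_range (fun j => (((2*(n-1-j)+1)! : ℚ))⁻¹),
      Finset.prod_range_reflect (fun j => (((2*j+1)! : ℚ))⁻¹) n,
      Finset.prod_inv_distrib]
  rw [hC]
  have hT : (∏ k ∈ Finset.range n, ((2*k+1)! : ℚ)) ≠ 0 := by
    refine Finset.prod_ne_zero_iff.mpr fun k _ => ?_
    exact_mod_cast (Nat.factorial_pos _).ne'
  rw [_root_.div_mul_div_comm, hbase, div_div_eq_mul_div]
  field_simp
  rw [mul_comm]
  congr 1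
  refine Finset.prod_congr rfl fun i _ => Finset.prod_congr rfl fun j _ => ?_
  ring
end

section
/- Let λ_1 ≥ λ_2 ≥ ... ≥ λ_n ≥ 0 and μ_1 ≥ ... ≥ μ_{n-1} ≥ 0 be integers satisfying the interlacing condition λ_j ≥ μ_j ≥ λ_{j+2} for j = 1, ..., n-1 (with λ_{n+1} = 0). Let x_1 ≥ y_1 ≥ x_2 ≥ y_2 ≥ ... ≥ x_{n-1} ≥ y_{n-1} ≥ x_n be the non-increasing rearrangement of the multiset {λ_1, ..., λ_n, μ_1, ..., μ_{n-1}}. Define the n×n matrix M by M_{ij} = {u_{ij} + 1 choose 1} (i.e., u_{ij}+1 if u_{ij} ≥ 0, else 0) for 1 ≤ j ≤ n-2, and M_{ij} = C(u_{ij} + n - j, n - j) for j = n-1, n, where u_{ij} = λ_i - μ_j + j - i with μ_{n-1} = μ_n = 0. Then det(M) = Π_{j=1}^{n-1} (x_j - y_j + 1). -/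
/-- `uent lam mu i j = λ_i - μ_j + j - i` (with 1-based indices `i, j`). -/
def uent (lam mu : ℕ → ℤ) (i j : ℕ) : ℤ := lam i - mu j + (j : ℤ) - (i : ℤ)

namespace GLB

lemma gchoose_zero (q : ℚ) : gchoose q 0 = 1 := by simp [gchoose]

lemma gchoose_one (q : ℚ) : gchoose q 1 = q := by simp [gchoose]

/-- pair off a list in twos, multiplying `(x - y + 1)` over consecutive pairs. -/
def Flist : List ℤ → ℚ
  | x :: y :: l => ((x - y + 1 : ℤ) : ℚ) * Flist l
  | _ => 1

/-- `Fm V` : pairwise product over the decreasing sort of `V`. -/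
def Fm (V : Multiset ℤ) : ℚ := Flist (V.sort (· ≥ ·))

lemma Fm_zero : Fm 0 = 1 := by simp [Fm, Multiset.sort_zero, Flist]

lemma Fm_single (x : ℤ) : Fm {x} = 1 := by simp [Fm, Multiset.sort_singleton, Flist]

lemma Fm_cons {x y : ℤ} {W : Multiset ℤ} (hxy : y ≤ x) (hW : ∀ z ∈ W, z ≤ y) :
    Fm (x ::ₘ y ::ₘ W) = ((x - y + 1 : ℤ) : ℚ) * Fm W := by
  have hsorted : List.Pairwise (· ≥ ·) (x :: y :: W.sort (· ≥ ·)) := by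
    rw [List.pairwise_cons]
    refine ⟨?_, ?_⟩
    · intro b hb
      rcases List.mem_cons.mp hb with h | h
      · subst h; exact hxy
      · exact le_trans (hW _ ((Multiset.mem_sort _).mp h)) hxy
    · rw [List.pairwise_cons]
      exact ⟨fun b hb => hW _ ((Multiset.mem_sort _).mp hb), Multiset.pairwise_sort _ _⟩
  have hperm : ((x ::ₘ y ::ₘ W).sort (· ≥ ·)).Perm (x :: y :: W.sort (· ≥ ·)) := by
    rw [← Multiset.coe_eq_coe, Multiset.sort_eq, ← Multiset.cons_coe, ← Multiset.cons_coe,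
      Multiset.sort_eq]
  have heq : (x ::ₘ y ::ₘ W).sort (· ≥ ·) = x :: y :: W.sort (· ≥ ·) :=
    List.Perm.eq_of_pairwise' (Multiset.pairwise_sort _ _) hsorted hperm
  rw [Fm, heq]
  rfl

/-- values `f 1, …, f m` as a multiset. -/
def Vms (m : ℕ) (f : ℕ → ℤ) : Multiset ℤ := (Multiset.range m).map (fun i => f (i + 1))

lemma Vms_zero (f : ℕ → ℤ) : Vms 0 f = 0 := rfl

lemma Vms_top (m : ℕ) (f : ℕ → ℤ) : Vms (m + 1) f = f (m + 1) ::ₘ Vms m f := by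
  simp [Vms, Multiset.range_succ]

lemma Vms_congr {m : ℕ} {f g : ℕ → ℤ} (h : ∀ i, 1 ≤ i → i ≤ m → f i = g i) :
    Vms m f = Vms m g := by
  refine Multiset.map_congr rfl ?_
  intro i hi
  rw [Multiset.mem_range] at hi
  exact h (i + 1) (by omega) (by omega)

lemma Vms_succ (m : ℕ) (f : ℕ → ℤ) :
    Vms (m + 1) f = f 1 ::ₘ Vms m (fun i => f (i + 1)) := by
  induction m generalizing f with
  | zero => simp [Vms, Multiset.range_succ]
  | succ k ih =>
    rw [Vms_top, ih f, Multiset.cons_swap, Vms_top]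

lemma mem_Vms {z : ℤ} {m : ℕ} {f : ℕ → ℤ} :
    z ∈ Vms m f ↔ ∃ i, 1 ≤ i ∧ i ≤ m ∧ z = f i := by
  simp only [Vms, Multiset.mem_map, Multiset.mem_range]
  constructor
  · rintro ⟨i, h1, h2⟩
    exact ⟨i + 1, by omega, by omega, h2.symm⟩
  · rintro ⟨i, h1, h2, h3⟩
    exact ⟨i - 1, by omega, by rw [h3]; congr 1; omega⟩

lemma Icc_val_map (m : ℕ) (f : ℕ → ℤ) : (Finset.Icc 1 m).val.map f = Vms m f := by
  induction m with
  | zero => simp [Vms_zero]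
  | succ k ih =>
    rw [← Finset.insert_Icc_right_eq_Icc_add_one (by omega),
      Finset.insert_val_of_notMem (by simp), Multiset.map_cons, ih, Vms_top]

lemma add_cons' (x : ℤ) (s t : Multiset ℤ) : s + (x ::ₘ t) = x ::ₘ (s + t) := by
  rw [add_comm, Multiset.cons_add, add_comm]

/-- antitone from step condition -/
lemma anti_help {f : ℕ → ℤ} {m : ℕ} (h : ∀ i, 1 ≤ i → i < m → f (i + 1) ≤ f i) :
    ∀ i k, 1 ≤ i → i ≤ k → k ≤ m → f k ≤ f i := by
  intro i k
  induction k with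
  | zero => omega
  | succ k ih =>
    intro h1 hik hkm
    rcases Nat.eq_or_lt_of_le hik with he | hl
    · rw [he]
    · exact le_trans (h k (by omega) (by omega)) (ih h1 (by omega) (by omega))

/-- entry of the abstract matrix, 1-based indices. -/
def Nent (m : ℕ) (a b : ℕ → ℤ) (i j : ℕ) : ℚ :=
  if j ≤ m - 1 then
    (if 0 ≤ uent a b i j then ((uent a b i j + 1 : ℤ) : ℚ) else 0)
  else 1

def Nmat (m : ℕ) (a b : ℕ → ℤ) : Matrix (Fin m) (Fin m) ℚ :=
  Matrix.of fun i j => Nent m a b ((i : ℕ) + 1) ((j : ℕ) + 1)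

lemma Nent_congr {m m' : ℕ} {a b a' b' : ℕ → ℤ} {i j i' j' : ℕ}
    (h1 : (j ≤ m - 1) ↔ (j' ≤ m' - 1))
    (h2 : uent a b i j = uent a' b' i' j') :
    Nent m a b i j = Nent m' a' b' i' j' := by
  unfold Nent
  rw [h2]
  exact if_congr h1 rfl rfl

lemma minorA (m : ℕ) (a b : ℕ → ℤ) :
    (Nmat (m + 1) a b).submatrix (Fin.succAbove 0) Fin.succ
      = Nmat m (fun i => a (i + 1)) (fun j => b (j + 1)) := by
  ext i j
  have hj : (j : ℕ) < m := j.isLt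
  rw [Fin.succAbove_zero]
  show Nent (m + 1) a b ((i : ℕ) + 1 + 1) ((j : ℕ) + 1 + 1)
      = Nent m (fun i => a (i + 1)) (fun j => b (j + 1)) ((i : ℕ) + 1) ((j : ℕ) + 1)
  refine Nent_congr (by omega) ?_
  unfold uent
  push_cast
  ring

lemma minorB (m : ℕ) (a b : ℕ → ℤ) :
    (Nmat (m + 2) a b).submatrix ((1 : Fin (m + 2)).succAbove) Fin.succ
      = Nmat (m + 1) (fun i => if i = 1 then a 1 + 1 else a (i + 1)) (fun j => b (j + 1)) := by
  ext i j
  simp only [Matrix.submatrix_apply, Nmat, Matrix.of_apply, Fin.val_succ]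
  induction i using Fin.cases with
  | zero =>
    have h0 : (((1 : Fin (m + 2)).succAbove 0 : Fin (m + 2)) : ℕ) = 0 := by
      rw [Fin.succAbove_of_castSucc_lt]
      · rfl
      · simp
    rw [h0]
    refine Nent_congr (by omega) ?_
    unfold uent
    simp only [Fin.val_zero, if_pos rfl]
    push_cast
    ring
  | succ i =>
    have h0 : (((1 : Fin (m + 2)).succAbove i.succ : Fin (m + 2)) : ℕ) = (i : ℕ) + 2 := by
      rw [Fin.succAbove_of_le_castSucc]
      · simp
      · rw [Fin.le_def]
        simp
    rw [h0]
    refine Nent_congr (by omega) ?_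
    unfold uent
    simp only [Fin.val_succ]
    rw [if_neg (by omega)]
    push_cast
    ring

lemma Nent_eval_pos {m : ℕ} {a b : ℕ → ℤ} {i j : ℕ} (hcol : j ≤ m - 1)
    (hu : 0 ≤ uent a b i j) : Nent m a b i j = ((uent a b i j + 1 : ℤ) : ℚ) := by
  unfold Nent; rw [if_pos hcol, if_pos hu]

lemma Nent_eval_neg {m : ℕ} {a b : ℕ → ℤ} {i j : ℕ} (hcol : j ≤ m - 1)
    (hu : uent a b i j < 0) : Nent m a b i j = 0 := by
  unfold Nent; rw [if_pos hcol, if_neg (by omega)]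

lemma Nent_eval_one {m : ℕ} {a b : ℕ → ℤ} {i j : ℕ} (hcol : ¬ (j ≤ m - 1)) :
    Nent m a b i j = 1 := by
  unfold Nent; rw [if_neg hcol]

theorem detN : ∀ (m : ℕ) (a b : ℕ → ℤ),
    (∀ i, 1 ≤ i → i < m → a (i + 1) ≤ a i) →
    (∀ j, 1 ≤ j → j < m - 1 → b (j + 1) ≤ b j) →
    (∀ j, 1 ≤ j → j ≤ m - 1 → b j ≤ a j) →
    (∀ j, 1 ≤ j → j + 2 ≤ m → a (j + 2) ≤ b j) →
    (Nmat m a b).det = Fm (Vms m a + Vms (m - 1) b) := by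
  intro m
  induction m with
  | zero =>
    intro a b _ _ _ _
    rw [Matrix.det_isEmpty]
    simp [Vms_zero, Fm_zero]
  | succ m ih =>
    intro a b ha hb hab hba
    obtain rfl | ⟨N, rfl⟩ : m = 0 ∨ ∃ N, m = N + 1 := by
      rcases m with _ | N
      · exact Or.inl rfl
      · exact Or.inr ⟨N, rfl⟩
    · -- size 1
      rw [Matrix.det_fin_one]
      have h1 : (Nmat 1 a b) 0 0 = Nent 1 a b 1 1 := rfl
      rw [h1, Nent_eval_one (by omega)]
      have hV : Vms 1 a + Vms 0 b = {a 1} := by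
        rw [Vms_succ 0 a, Vms_zero, Vms_zero]; rfl
      rw [hV, Fm_single]
    · -- size N + 2
      have anti_a : ∀ i k, 1 ≤ i → i ≤ k → k ≤ N + 2 → a k ≤ a i := anti_help ha
      have anti_b : ∀ i k, 1 ≤ i → i ≤ k → k ≤ N + 1 → b k ≤ b i :=
        anti_help (fun j h1 h2 => hb j h1 (by omega))
      have hab1 : b 1 ≤ a 1 := hab 1 (by omega) (by omega)
      -- expansion along the first column
      rw [Matrix.det_succ_column_zero, Fin.sum_univ_succ, Fin.sum_univ_succ]
      have hzero : (∑ i : Fin N,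
          (-1 : ℚ) ^ (((i.succ.succ : Fin (N + 2))) : ℕ) * Nmat (N + 2) a b i.succ.succ 0 *
            ((Nmat (N + 2) a b).submatrix i.succ.succ.succAbove Fin.succ).det) = 0 := by
        refine Finset.sum_eq_zero fun i _ => ?_
        have hlt : (i : ℕ) < N := i.isLt
        have hent : Nmat (N + 2) a b i.succ.succ 0
            = Nent (N + 2) a b ((i : ℕ) + 1 + 1 + 1) 1 := rfl
        have hu : uent a b ((i : ℕ) + 1 + 1 + 1) 1 < 0 := by
          unfold uent
          have h1 : a ((i : ℕ) + 1 + 1 + 1) ≤ a 3 :=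
            anti_a 3 ((i : ℕ) + 1 + 1 + 1) (by omega) (by omega) (by omega)
          have h2 : a 3 ≤ b 1 := hba 1 (by omega) (by omega)
          push_cast
          omega
        rw [hent, Nent_eval_neg (by omega) hu]
        ring
      rw [hzero]
      have e11 : Nmat (N + 2) a b 0 0 = ((a 1 - b 1 + 1 : ℤ) : ℚ) := by
        have hu : (0 : ℤ) ≤ uent a b 1 1 := by unfold uent; push_cast; omega
        have h0 := Nent_eval_pos (m := N + 2) (a := a) (b := b) (i := 1) (j := 1)
          (by omega) hu
        rw [show Nmat (N + 2) a b 0 0 = Nent (N + 2) a b 1 1 from rfl, h0]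
        unfold uent; push_cast; ring
      -- identify the two minors
      rw [show ((0 : Fin (N + 1)).succ) = (1 : Fin (N + 2)) from rfl]
      rw [minorA (N + 1) a b, minorB N a b]
      have hihA := ih (fun i => a (i + 1)) (fun j => b (j + 1))
        (fun i h1 h2 => ha (i + 1) (by omega) (by omega))
        (fun j h1 h2 => hb (j + 1) (by omega) (by omega))
        (fun j h1 h2 => hab (j + 1) (by omega) (by omega))
        (fun j h1 h2 => hba (j + 1) (by omega) (by omega))
      rw [hihA]
      have e21 : Nmat (N + 2) a b 1 0 = if 0 ≤ a 2 - b 1 - 1 then ((a 2 - b 1 : ℤ) : ℚ) else 0 := by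
        rw [show Nmat (N + 2) a b 1 0 = Nent (N + 2) a b 2 1 from rfl]
        unfold Nent uent
        rw [if_pos (by omega : (1 : ℕ) ≤ N + 2 - 1)]
        have : a 2 - b 1 + ((1 : ℕ) : ℤ) - ((2 : ℕ) : ℤ) = a 2 - b 1 - 1 := by push_cast; ring
        rw [this]
        split_ifs with h
        · push_cast; ring
        · rfl
      rw [e11, e21]
      simp only [Fin.val_zero, pow_zero, one_mul, Fin.val_one, pow_one, Fin.isValue]
      by_cases hcase : a 2 ≤ b 1
      · -- Case A
        rw [if_neg (by omega)]
        have hV : Vms (N + 2) a + Vms (N + 2 - 1) b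
            = a 1 ::ₘ b 1 ::ₘ (Vms (N + 1) (fun i => a (i + 1)) + Vms N (fun j => b (j + 1))) := by
          rw [show Vms (N + 2 - 1) b = Vms (N + 1) b from rfl,
            Vms_succ (N + 1) a, Vms_succ N b, Multiset.cons_add, add_cons']
        rw [hV, Fm_cons hab1]
        · push_cast; ring
        · intro z hz
          rw [Multiset.mem_add] at hz
          rcases hz with hz | hz <;> rw [mem_Vms] at hz <;> obtain ⟨i, h1, h2, rfl⟩ := hz
          · exact le_trans (anti_a 2 (i + 1) (by omega) (by omega) (by omega)) hcase
          · exact anti_b 1 (i + 1) (by omega) (by omega) (by omega)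
      · -- Case B
        rw [if_pos (by omega)]
        have hihB := ih (fun i => if i = 1 then a 1 + 1 else a (i + 1)) (fun j => b (j + 1))
          ?_ (fun j h1 h2 => hb (j + 1) (by omega) (by omega)) ?_ ?_
        rotate_left
        · intro i h1 h2
          rcases Nat.eq_or_lt_of_le h1 with rfl | hl
          · rw [if_neg (by omega), if_pos rfl]
            have h3 := anti_a 1 3 (by omega) (by omega) (by omega)
            show a 3 ≤ a 1 + 1
            omega
          · rw [if_neg (by omega), if_neg (by omega)]
            exact ha (i + 1) (by omega) (by omega)
        · intro j h1 h2
          rcases Nat.eq_or_lt_of_le h1 with rfl | hl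
          · rw [if_pos rfl]
            have hb21 : b 2 ≤ b 1 := anti_b 1 2 (by omega) (by omega) (by omega)
            have hab1' : b 1 ≤ a 1 := hab1
            show b 2 ≤ a 1 + 1
            omega
          · rw [if_neg (by omega)]
            exact hab (j + 1) (by omega) (by omega)
        · intro j h1 h2
          rw [if_neg (by omega)]
          exact hba (j + 1) (by omega) (by omega)
        rw [hihB]
        have hVB : Vms (N + 1) (fun i => if i = 1 then a 1 + 1 else a (i + 1))
              + Vms (N + 1 - 1) (fun j => b (j + 1))
            = (a 1 + 1) ::ₘ (Vms N (fun i => a (i + 2)) + Vms N (fun j => b (j + 1))) := by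
          rw [Vms_succ N (fun i => if i = 1 then a 1 + 1 else a (i + 1)), Multiset.cons_add]
          have h1 : Vms N (fun i => if i + 1 = 1 then a 1 + 1 else a (i + 1 + 1))
              = Vms N (fun i => a (i + 2)) := by
            refine Vms_congr fun i hi1 hi2 => ?_
            rw [if_neg (by omega)]
          rw [h1]
          rw [if_pos rfl]
          rfl
        have hVA : Vms (N + 1) (fun i => a (i + 1)) + Vms (N + 1 - 1) (fun j => b (j + 1))
            = a 2 ::ₘ (Vms N (fun i => a (i + 2)) + Vms N (fun j => b (j + 1))) := by
          rw [Vms_succ N (fun i => a (i + 1)), Multiset.cons_add]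
          rfl
        have hV : Vms (N + 2) a + Vms (N + 2 - 1) b
            = a 1 ::ₘ a 2 ::ₘ b 1 ::ₘ (Vms N (fun i => a (i + 2)) + Vms N (fun j => b (j + 1))) := by
          rw [show Vms (N + 2 - 1) b = Vms (N + 1) b from rfl,
            Vms_succ (N + 1) a, Vms_succ N (fun i => a (i + 1)), Vms_succ N b,
            Multiset.cons_add, Multiset.cons_add, add_cons']
        rw [hVB, hVA, hV]
        -- now split on N = 0 or N ≥ 1
        obtain rfl | ⟨K, rfl⟩ : N = 0 ∨ ∃ K, N = K + 1 := by
          rcases N with _ | K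
          · exact Or.inl rfl
          · exact Or.inr ⟨K, rfl⟩
        · -- N = 0 : size-2 case
          rw [Vms_zero, Vms_zero]
          have h2 : ((0 : Multiset ℤ) + 0) = 0 := by simp
          rw [h2]
          have hx1 : Fm ((a 1 + 1) ::ₘ (0 : Multiset ℤ)) = 1 := Fm_single _
          have hx2 : Fm (a 2 ::ₘ (0 : Multiset ℤ)) = 1 := Fm_single _
          have hx3 : Fm (a 1 ::ₘ a 2 ::ₘ b 1 ::ₘ (0 : Multiset ℤ))
              = ((a 1 - a 2 + 1 : ℤ) : ℚ) * Fm (b 1 ::ₘ 0) := by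
            refine Fm_cons (anti_a 1 2 (by omega) (by omega) (by omega)) ?_
            intro z hz
            rw [show (b 1 ::ₘ (0:Multiset ℤ)) = {b 1} from rfl, Multiset.mem_singleton] at hz
            omega
          have hx4 : Fm (b 1 ::ₘ (0 : Multiset ℤ)) = 1 := Fm_single _
          rw [hx1, hx2, hx3, hx4]
          push_cast
          ring
        · -- N = K + 1 ≥ 1
          have hsplit : ∃ z W, (Vms (K + 1) (fun i => a (i + 2)) + Vms (K + 1) (fun j => b (j + 1)))
                = z ::ₘ W ∧ (∀ w ∈ W, w ≤ z) ∧ z ≤ b 1 ∧ z ≤ a 2 := by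
            have hmem : ∀ w ∈ Vms K (fun i => a (i + 3)), w ≤ a 3 := by
              intro w hw
              rw [mem_Vms] at hw
              obtain ⟨i, h1, h2, rfl⟩ := hw
              exact anti_a 3 (i + 3) (by omega) (by omega) (by omega)
            have hmem2 : ∀ w ∈ Vms K (fun j => b (j + 2)), w ≤ b 2 := by
              intro w hw
              rw [mem_Vms] at hw
              obtain ⟨i, h1, h2, rfl⟩ := hw
              exact anti_b 2 (i + 2) (by omega) (by omega) (by omega)
            have ha3b1 : a 3 ≤ b 1 := hba 1 (by omega) (by omega)
            have hb2b1 : b 2 ≤ b 1 := anti_b 1 2 (by omega) (by omega) (by omega)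
            rcases le_total (b 2) (a 3) with hz | hz
            · refine ⟨a 3, Vms K (fun i => a (i + 3)) + Vms (K + 1) (fun j => b (j + 1)),
                ?_, ?_, ha3b1, by omega⟩
              · rw [Vms_succ K (fun i => a (i + 2)), Multiset.cons_add]
              · intro w hw
                rw [Multiset.mem_add] at hw
                rcases hw with hw | hw
                · exact hmem w hw
                · rw [mem_Vms] at hw
                  obtain ⟨i, h1, h2, rfl⟩ := hw
                  exact le_trans (anti_b 2 (i + 1) (by omega) (by omega) (by omega)) hz
            · refine ⟨b 2, Vms (K + 1) (fun i => a (i + 2)) + Vms K (fun j => b (j + 2)),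
                ?_, ?_, hb2b1, by omega⟩
              · rw [Vms_succ K (fun j => b (j + 1)), add_cons']
              · intro w hw
                rw [Multiset.mem_add] at hw
                rcases hw with hw | hw
                · rw [mem_Vms] at hw
                  obtain ⟨i, h1, h2, rfl⟩ := hw
                  exact le_trans (anti_a 3 (i + 2) (by omega) (by omega) (by omega)) hz
                · exact hmem2 w hw
          obtain ⟨z, W, hzW, hWz, hzb1, hza2⟩ := hsplit
          rw [hzW]
          have ha21 : a 2 ≤ a 1 := anti_a 1 2 (by omega) (by omega) (by omega)
          have hFV : Fm (a 1 ::ₘ a 2 ::ₘ b 1 ::ₘ z ::ₘ W)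
              = ((a 1 - a 2 + 1 : ℤ) : ℚ) * (((b 1 - z + 1 : ℤ) : ℚ) * Fm W) := by
            rw [Fm_cons ha21, Fm_cons hzb1 hWz]
            intro w hw
            rcases Multiset.mem_cons.mp hw with rfl | hw
            · omega
            · rcases Multiset.mem_cons.mp hw with rfl | hw
              · omega
              · have := hWz w hw; omega
          have hFA : Fm (a 2 ::ₘ z ::ₘ W) = ((a 2 - z + 1 : ℤ) : ℚ) * Fm W :=
            Fm_cons hza2 hWz
          have hFB : Fm ((a 1 + 1) ::ₘ z ::ₘ W) = ((a 1 + 1 - z + 1 : ℤ) : ℚ) * Fm W :=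
            Fm_cons (by omega) hWz
          rw [hFV, hFA, hFB]
          push_cast
          ring

lemma chain_x_le {n : ℕ} {x y : ℕ → ℤ}
    (hchain : ∀ j, 1 ≤ j → j ≤ n - 1 → y j ≤ x j ∧ x (j + 1) ≤ y j) :
    ∀ i, 2 ≤ i → i ≤ n → x i ≤ y 1 := by
  intro i
  induction i with
  | zero => omega
  | succ k ih =>
    intro h2 hn
    rcases Nat.lt_or_ge k 2 with hk | hk
    · have hk1 : k = 1 := by omega
      subst hk1
      exact (hchain 1 (by omega) (by omega)).2
    · have h3 := hchain k (by omega) (by omega)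
      exact le_trans h3.2 (le_trans h3.1 (ih (by omega) (by omega)))

lemma prod_Icc_one (m : ℕ) (f : ℕ → ℚ) :
    ∏ j ∈ Finset.Icc 1 m, f j = ∏ j ∈ Finset.range m, f (j + 1) := by
  induction m with
  | zero => simp
  | succ k ih =>
    rw [← Finset.insert_Icc_right_eq_Icc_add_one (by omega), Finset.prod_insert (by simp), ih,
      Finset.prod_range_succ]
    ring

lemma Fm_chain : ∀ (n : ℕ) (x y : ℕ → ℤ),
    (∀ j, 1 ≤ j → j ≤ n - 1 → y j ≤ x j ∧ x (j + 1) ≤ y j) →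
    Fm (Vms n x + Vms (n - 1) y) = ∏ j ∈ Finset.Icc 1 (n - 1), ((x j - y j + 1 : ℤ) : ℚ) := by
  intro n
  induction n with
  | zero =>
    intro x y _
    simp [Vms_zero, Fm_zero]
  | succ n ih =>
    intro x y hchain
    obtain rfl | ⟨K, rfl⟩ : n = 0 ∨ ∃ K, n = K + 1 := by
      rcases n with _ | K
      · exact Or.inl rfl
      · exact Or.inr ⟨K, rfl⟩
    · have hV : Vms 1 x + Vms 0 y = {x 1} := by
        rw [Vms_succ 0 x, Vms_zero, Vms_zero]; rfl
      rw [hV, Fm_single]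
      simp
    · have hxy1 : y 1 ≤ x 1 := (hchain 1 (by omega) (by omega)).1
      have hx := chain_x_le hchain
      have hy : ∀ j, 1 ≤ j → j ≤ K + 1 → y j ≤ y 1 := by
        intro j h1 h2
        rcases Nat.lt_or_ge j 2 with h | h
        · have : j = 1 := by omega
          subst this
          exact le_refl _
        · exact le_trans (hchain j (by omega) (by omega)).1 (hx j (by omega) (by omega))
      have hV : Vms (K + 2) x + Vms (K + 2 - 1) y
          = x 1 ::ₘ y 1 ::ₘ (Vms (K + 1) (fun i => x (i + 1)) + Vms K (fun j => y (j + 1))) := by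
        rw [show Vms (K + 2 - 1) y = Vms (K + 1) y from rfl,
          Vms_succ (K + 1) x, Vms_succ K y, Multiset.cons_add, add_cons']
      have hbound : ∀ z ∈ Vms (K + 1) (fun i => x (i + 1)) + Vms K (fun j => y (j + 1)), z ≤ y 1 := by
        intro z hz
        rw [Multiset.mem_add] at hz
        rcases hz with hz | hz <;> rw [mem_Vms] at hz <;> obtain ⟨i, h1, h2, rfl⟩ := hz
        · exact hx (i + 1) (by omega) (by omega)
        · exact hy (i + 1) (by omega) (by omega)
      have hIH := ih (fun i => x (i + 1)) (fun j => y (j + 1))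
          (fun j h1 h2 => hchain (j + 1) (by omega) (by omega))
      rw [hV, Fm_cons hxy1 hbound,
        show Vms K (fun j => y (j + 1)) = Vms (K + 1 - 1) (fun j => y (j + 1)) from rfl, hIH]
      rw [show K + 2 - 1 = K + 1 from rfl, show K + 1 - 1 = K from rfl]
      rw [prod_Icc_one (K + 1), prod_Icc_one K, Finset.prod_range_succ']
      norm_num
      ring

end GLB

/-- Product formula for the branching multiplicity of `GL(n-2) ⊂ GL(n)`:
the branching determinant equals `∏_{j=1}^{n-1} (x_j - y_j + 1)`, where
`x_1 ≥ y_1 ≥ x_2 ≥ ⋯ ≥ x_{n-1} ≥ y_{n-1} ≥ x_n` is the non-increasing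
rearrangement of `{λ_1, …, λ_n, μ_1, …, μ_{n-1}}`. -/
theorem gl_branching_det_product (n : ℕ) (lam mu x y : ℕ → ℤ)
    (hlam_dec : ∀ j, 1 ≤ j → j < n → lam (j + 1) ≤ lam j)
    (hlam_nonneg : 0 ≤ lam n)
    (hlam_top : lam (n + 1) = 0)
    (hmu_dec : ∀ j, 1 ≤ j → j < n - 1 → mu (j + 1) ≤ mu j)
    (hmu1 : mu (n - 1) = 0)
    (hmu2 : mu n = 0)
    (hinter : ∀ j, 1 ≤ j → j ≤ n - 1 → mu j ≤ lam j ∧ lam (j + 2) ≤ mu j)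
    (hchain : ∀ j, 1 ≤ j → j ≤ n - 1 → y j ≤ x j ∧ x (j + 1) ≤ y j)
    (hmulti : (Finset.Icc 1 n).val.map lam + (Finset.Icc 1 (n - 1)).val.map mu =
              (Finset.Icc 1 n).val.map x + (Finset.Icc 1 (n - 1)).val.map y) :
    Matrix.det (Matrix.of fun i j : Fin n =>
        if (j : ℕ) + 1 ≤ n - 2 then
          (if 0 ≤ uent lam mu ((i : ℕ) + 1) ((j : ℕ) + 1) then
            ((uent lam mu ((i : ℕ) + 1) ((j : ℕ) + 1) + 1 : ℤ) : ℚ)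
          else 0)
        else
          gchoose (((uent lam mu ((i : ℕ) + 1) ((j : ℕ) + 1) : ℤ) : ℚ) +
            ((n - 1 - (j : ℕ) : ℕ) : ℚ)) (n - 1 - (j : ℕ))) =
    ∏ j ∈ Finset.Icc 1 (n - 1), ((x j - y j + 1 : ℤ) : ℚ) := by
  classical
  have hmat : (Matrix.of fun i j : Fin n =>
        if (j : ℕ) + 1 ≤ n - 2 then
          (if 0 ≤ uent lam mu ((i : ℕ) + 1) ((j : ℕ) + 1) then
            ((uent lam mu ((i : ℕ) + 1) ((j : ℕ) + 1) + 1 : ℤ) : ℚ)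
          else 0)
        else
          gchoose (((uent lam mu ((i : ℕ) + 1) ((j : ℕ) + 1) : ℤ) : ℚ) +
            ((n - 1 - (j : ℕ) : ℕ) : ℚ)) (n - 1 - (j : ℕ)))
      = GLB.Nmat n lam mu := by
    ext i j
    have hj : (j : ℕ) < n := j.isLt
    have hi : (i : ℕ) < n := i.isLt
    show (if (j : ℕ) + 1 ≤ n - 2 then
          (if 0 ≤ uent lam mu ((i : ℕ) + 1) ((j : ℕ) + 1) then
            ((uent lam mu ((i : ℕ) + 1) ((j : ℕ) + 1) + 1 : ℤ) : ℚ)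
          else 0)
        else
          gchoose (((uent lam mu ((i : ℕ) + 1) ((j : ℕ) + 1) : ℤ) : ℚ) +
            ((n - 1 - (j : ℕ) : ℕ) : ℚ)) (n - 1 - (j : ℕ)))
        = GLB.Nent n lam mu ((i : ℕ) + 1) ((j : ℕ) + 1)
    by_cases h1 : (j : ℕ) + 1 ≤ n - 2
    · rw [if_pos h1]
      unfold GLB.Nent
      rw [if_pos (show (j : ℕ) + 1 ≤ n - 1 by omega)]
    · rw [if_neg h1]
      by_cases h2 : (j : ℕ) + 1 = n
      · have hk : n - 1 - (j : ℕ) = 0 := by omega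
        rw [hk, GLB.gchoose_zero, GLB.Nent_eval_one (by omega)]
      · have hn2 : 2 ≤ n := by omega
        have hj1 : (j : ℕ) + 1 = n - 1 := by omega
        have hk : n - 1 - (j : ℕ) = 1 := by omega
        rw [hk, show ((1 : ℕ) : ℚ) = 1 from by norm_num, GLB.gchoose_one]
        have hmu0 : mu ((j : ℕ) + 1) = 0 := by rw [hj1]; exact hmu1
        have hlamb : lam n ≤ lam ((i : ℕ) + 1) :=
          GLB.anti_help hlam_dec ((i : ℕ) + 1) n (by omega) (by omega) (by omega)
        have hum : -1 ≤ uent lam mu ((i : ℕ) + 1) ((j : ℕ) + 1) := by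
          unfold uent
          rw [hmu0]
          push_cast
          omega
        unfold GLB.Nent
        rw [if_pos (by omega)]
        rcases le_or_gt 0 (uent lam mu ((i : ℕ) + 1) ((j : ℕ) + 1)) with hpos | hneg
        · rw [if_pos hpos]
          push_cast
          ring
        · rw [if_neg (by omega)]
          have hm1 : uent lam mu ((i : ℕ) + 1) ((j : ℕ) + 1) = -1 := by omega
          rw [hm1]
          norm_num
  rw [hmat]
  rw [GLB.detN n lam mu hlam_dec hmu_dec
    (fun j hj1 hj2 => (hinter j hj1 hj2).1)
    (fun j hj1 hj2 => (hinter j hj1 (by omega)).2)]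
  rw [GLB.Icc_val_map, GLB.Icc_val_map, GLB.Icc_val_map, GLB.Icc_val_map] at hmulti
  rw [hmulti]
  exact GLB.Fm_chain n x y hchain
end
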